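/- For each i ∈ {1,2,3,4}, the single-qubit reduced density matrices of the EJM state ψ_i form a tetrahedral configuration of Bloch length √3/2: Tr₂ |ψ_i⟩⟨ψ_i| = (1/2)(I + (√3/2) m_i·σ) and Tr₁ |ψ_i⟩⟨ψ_i| = (1/2)(I − (√3/2) m_i·σ), where Tr₂ and Tr₁ denote the partial traces over the second and first qubit respectively. -/

import Mathlib

/-! For a unit Bloch vector `m`, `|m⟩⟨m| = ½(1 + m·σ)` and `|−m⟩⟨−m| = ½(1 − m·σ)`, and the two
kets are orthonormal. Tracing out either factor of `α |u⟩|v⟩ + β |v⟩|u⟩` with `u ⊥ v` kills the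
cross terms and leaves `|α|² |u⟩⟨u| + |β|² |v⟩⟨v|` (the roles of `u` and `v` swap for the other
factor). For the EJM weights `|α|² = (2 + √3)/4`, `|β|² = (2 − √3)/4`, so `|α|² + |β|² = 1` and
`|α|² − |β|² = √3/2`, which is the shrunken Bloch vector `± (√3/2) m`. -/

open Matrix Complex Kronecker

noncomputable section

def X2 : Matrix (Fin 2) (Fin 2) ℂ := !![0, 1; 1, 0]
def Y2 : Matrix (Fin 2) (Fin 2) ℂ := !![0, -Complex.I; Complex.I, 0]
def Z2 : Matrix (Fin 2) (Fin 2) ℂ := !![1, 0; 0, -1]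

/-- The tetrahedral Bloch vectors `m₁, m₂, m₃, m₄` (0-indexed). -/
def mtet : Fin 4 → Fin 3 → ℝ := fun i j =>
  (![![1, 1, 1], ![1, -1, -1], ![-1, 1, -1], ![-1, -1, 1]] : Fin 4 → Fin 3 → ℝ) i j /
    Real.sqrt 3

def bTheta (m : Fin 3 → ℝ) : ℝ := Real.arccos (m 2)
def bPhi (m : Fin 3 → ℝ) : ℝ := Complex.arg ((m 0 : ℂ) + (m 1 : ℂ) * Complex.I)

/-- `|m⟩ = cos(θ/2)|0⟩ + sin(θ/2) e^{iφ} |1⟩`. -/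
def ketP (m : Fin 3 → ℝ) : Fin 2 → ℂ :=
  ![(Real.cos (bTheta m / 2) : ℂ),
    (Real.sin (bTheta m / 2) : ℂ) * Complex.exp ((bPhi m : ℂ) * Complex.I)]

/-- `|−m⟩ = sin(θ/2)|0⟩ − cos(θ/2) e^{iφ} |1⟩`. -/
def ketM (m : Fin 3 → ℝ) : Fin 2 → ℂ :=
  ![(Real.sin (bTheta m / 2) : ℂ),
    -((Real.cos (bTheta m / 2) : ℂ)) * Complex.exp ((bPhi m : ℂ) * Complex.I)]

/-- Tensor product of two qubit vectors. -/
def tp (u w : Fin 2 → ℂ) : Fin 2 × Fin 2 → ℂ := fun p => u p.1 * w p.2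

/-- The EJM basis states `ψ_1, …, ψ_4` (0-indexed). -/
def ψEJM (i : Fin 4) : Fin 2 × Fin 2 → ℂ :=
  (((Real.sqrt 3 + 1) / (2 * Real.sqrt 2) : ℝ) : ℂ) • tp (ketP (mtet i)) (ketM (mtet i)) +
    (((Real.sqrt 3 - 1) / (2 * Real.sqrt 2) : ℝ) : ℂ) • tp (ketM (mtet i)) (ketP (mtet i))

/-- Inner product on `ℂ² ⊗ ℂ²` (conjugate-linear in the first argument). -/
def ip2 (v w : Fin 2 × Fin 2 → ℂ) : ℂ := ∑ p, star (v p) * w p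

/-- `m·σ = m_x X + m_y Y + m_z Z`. -/
def mDotSigma (m : Fin 3 → ℝ) : Matrix (Fin 2) (Fin 2) ℂ :=
  (m 0 : ℂ) • X2 + (m 1 : ℂ) • Y2 + (m 2 : ℂ) • Z2

end

noncomputable section

/-- Partial trace over the second qubit. -/
def ptr2 (ρ : Matrix (Fin 2 × Fin 2) (Fin 2 × Fin 2) ℂ) : Matrix (Fin 2) (Fin 2) ℂ :=
  fun a b => ∑ c : Fin 2, ρ (a, c) (b, c)

/-- Partial trace over the first qubit. -/
def ptr1 (ρ : Matrix (Fin 2 × Fin 2) (Fin 2 × Fin 2) ℂ) : Matrix (Fin 2) (Fin 2) ℂ :=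
  fun a b => ∑ c : Fin 2, ρ (c, a) (c, b)

/-- The projector `|ψ⟩⟨ψ|`. -/
def outer (ψ : Fin 2 × Fin 2 → ℂ) : Matrix (Fin 2 × Fin 2) (Fin 2 × Fin 2) ℂ :=
  Matrix.vecMulVec ψ (star ψ)

open ComplexConjugate

theorem mDotSigma_eq (m : Fin 3 → ℝ) :
    mDotSigma m = !![(m 2 : ℂ), m 0 - m 1 * I; m 0 + m 1 * I, -m 2] := by
  ext a b
  fin_cases a <;> fin_cases b <;> simp [mDotSigma, X2, Y2, Z2, sub_eq_add_neg]

section BlochKets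

variable {m : Fin 3 → ℝ}

theorem cos_half_bTheta_sq (h : |m 2| ≤ 1) :
    (Real.cos (bTheta m / 2) : ℂ) ^ 2 = (1 + m 2) / 2 := by
  have h₁₂ := abs_le.mp h
  have hcos : Real.cos (bTheta m / 2) ^ 2 = (1 + m 2) / 2 := by
    rw [Real.cos_sq, mul_div_cancel₀ _ two_ne_zero, bTheta, Real.cos_arccos h₁₂.1 h₁₂.2]
    ring
  exact_mod_cast hcos

theorem sin_half_bTheta_sq (h : |m 2| ≤ 1) :
    (Real.sin (bTheta m / 2) : ℂ) ^ 2 = (1 - m 2) / 2 := by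
  have hsin : (Real.sin (bTheta m / 2) : ℂ) ^ 2 = 1 - (Real.cos (bTheta m / 2) : ℂ) ^ 2 := by
    exact_mod_cast Real.sin_sq _
  rw [hsin, cos_half_bTheta_sq h]
  ring

theorem cos_mul_sin_half_bTheta_mul_exp_bPhi (hm : m 0 ^ 2 + m 1 ^ 2 + m 2 ^ 2 = 1) :
    (Real.cos (bTheta m / 2) : ℂ) * Real.sin (bTheta m / 2) * exp (bPhi m * I) =
      (m 0 + m 1 * I) / 2 := by
  have hsin : Real.sin (bTheta m) = ‖(m 0 + m 1 * I : ℂ)‖ := by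
    rw [bTheta, Real.sin_arccos, Complex.norm_add_mul_I, ← hm, add_sub_cancel_right]
  have hcs : Real.cos (bTheta m / 2) * Real.sin (bTheta m / 2) = Real.sin (bTheta m) / 2 := by
    rw [← mul_div_cancel₀ (bTheta m) two_ne_zero, Real.sin_two_mul,
      mul_div_cancel_left₀ _ two_ne_zero]
    ring
  rw [← Complex.ofReal_mul, hcs, hsin, Complex.ofReal_div, div_mul_eq_mul_div, bPhi,
    Complex.norm_mul_exp_arg_mul_I, Complex.ofReal_ofNat]

theorem cos_mul_sin_half_bTheta_mul_conj_exp_bPhi (hm : m 0 ^ 2 + m 1 ^ 2 + m 2 ^ 2 = 1) :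
    (Real.cos (bTheta m / 2) : ℂ) * Real.sin (bTheta m / 2) * conj (exp (bPhi m * I)) =
      (m 0 - m 1 * I) / 2 := by
  simpa [-Complex.ofReal_cos, -Complex.ofReal_sin, sub_eq_add_neg, map_ofNat] using
    congrArg conj (cos_mul_sin_half_bTheta_mul_exp_bPhi hm)

theorem exp_bPhi_mul_I_mul_conj : exp (bPhi m * I) * conj (exp (bPhi m * I)) = 1 := by
  rw [Complex.mul_conj, Complex.normSq_eq_norm_sq, Complex.norm_exp_ofReal_mul_I]
  norm_num

theorem vecMulVec_ketP_star (hm : m 0 ^ 2 + m 1 ^ 2 + m 2 ^ 2 = 1) :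
    vecMulVec (ketP m) (star (ketP m)) = (1 / 2 : ℂ) • (1 + mDotSigma m) := by
  have h : |m 2| ≤ 1 := (sq_le_one_iff_abs_le_one _).mp (by nlinarith)
  rw [mDotSigma_eq, one_fin_two]
  ext a b
  fin_cases a <;> fin_cases b <;>
    simp only [Fin.zero_eta, Fin.mk_one, vecMulVec_apply, Pi.star_apply, Matrix.smul_apply,
      Matrix.add_apply, of_apply, cons_val', cons_val_zero, cons_val_one, cons_val_fin_one,
      ketP, star_mul', RCLike.star_def, conj_ofReal, smul_eq_mul]
  · linear_combination cos_half_bTheta_sq h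
  · linear_combination cos_mul_sin_half_bTheta_mul_conj_exp_bPhi hm
  · linear_combination cos_mul_sin_half_bTheta_mul_exp_bPhi hm
  · linear_combination (Real.sin (bTheta m / 2) : ℂ) ^ 2 * exp_bPhi_mul_I_mul_conj +
      sin_half_bTheta_sq h

theorem vecMulVec_ketM_star (hm : m 0 ^ 2 + m 1 ^ 2 + m 2 ^ 2 = 1) :
    vecMulVec (ketM m) (star (ketM m)) = (1 / 2 : ℂ) • (1 - mDotSigma m) := by
  have h : |m 2| ≤ 1 := (sq_le_one_iff_abs_le_one _).mp (by nlinarith)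
  rw [mDotSigma_eq, one_fin_two]
  ext a b
  fin_cases a <;> fin_cases b <;>
    simp only [Fin.zero_eta, Fin.mk_one, vecMulVec_apply, Pi.star_apply, Matrix.smul_apply,
      Matrix.sub_apply, of_apply, cons_val', cons_val_zero, cons_val_one, cons_val_fin_one,
      ketM, star_mul', star_neg, RCLike.star_def, conj_ofReal, smul_eq_mul]
  · linear_combination sin_half_bTheta_sq h
  · linear_combination -cos_mul_sin_half_bTheta_mul_conj_exp_bPhi hm
  · linear_combination -cos_mul_sin_half_bTheta_mul_exp_bPhi hm
  · linear_combination (Real.cos (bTheta m / 2) : ℂ) ^ 2 * exp_bPhi_mul_I_mul_conj +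
      cos_half_bTheta_sq h

theorem ketP_dotProduct_star_self : ketP m ⬝ᵥ star (ketP m) = 1 := by
  have hcs : (Real.cos (bTheta m / 2) : ℂ) ^ 2 + (Real.sin (bTheta m / 2) : ℂ) ^ 2 = 1 := by
    exact_mod_cast Real.cos_sq_add_sin_sq _
  simp only [dotProduct, Fin.sum_univ_two, ketP, Pi.star_apply, Complex.star_def, map_mul,
    Complex.conj_ofReal, Matrix.cons_val_zero, Matrix.cons_val_one]
  linear_combination (Real.sin (bTheta m / 2) : ℂ) ^ 2 * exp_bPhi_mul_I_mul_conj + hcs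

theorem ketM_dotProduct_star_self : ketM m ⬝ᵥ star (ketM m) = 1 := by
  have hcs : (Real.cos (bTheta m / 2) : ℂ) ^ 2 + (Real.sin (bTheta m / 2) : ℂ) ^ 2 = 1 := by
    exact_mod_cast Real.cos_sq_add_sin_sq _
  simp only [dotProduct, Fin.sum_univ_two, ketM, Pi.star_apply, Complex.star_def, map_mul,
    map_neg, Complex.conj_ofReal, Matrix.cons_val_zero, Matrix.cons_val_one]
  linear_combination (Real.cos (bTheta m / 2) : ℂ) ^ 2 * exp_bPhi_mul_I_mul_conj + hcs

theorem ketP_dotProduct_star_ketM : ketP m ⬝ᵥ star (ketM m) = 0 := by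
  simp only [dotProduct, Fin.sum_univ_two, ketP, ketM, Pi.star_apply, Complex.star_def, map_mul,
    map_neg, Complex.conj_ofReal, Matrix.cons_val_zero, Matrix.cons_val_one]
  linear_combination
    -(Real.cos (bTheta m / 2) * Real.sin (bTheta m / 2) : ℂ) * exp_bPhi_mul_I_mul_conj

end BlochKets

theorem ptr1_outer_eq_ptr2_outer_comp_swap (ψ : Fin 2 × Fin 2 → ℂ) :
    ptr1 (outer ψ) = ptr2 (outer (ψ ∘ Prod.swap)) :=
  rfl

section SwapSuperposition

variable (α β : ℂ) {u v : Fin 2 → ℂ}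

theorem ptr2_outer_smul_tp_add_smul_tp (hu : u ⬝ᵥ star u = 1) (hv : v ⬝ᵥ star v = 1)
    (huv : u ⬝ᵥ star v = 0) :
    ptr2 (outer (α • tp u v + β • tp v u)) =
      (normSq α : ℂ) • vecMulVec u (star u) + (normSq β : ℂ) • vecMulVec v (star v) := by
  have hvu : v ⬝ᵥ star u = 0 := by rw [dotProduct_star, huv, star_zero]
  simp only [dotProduct, Fin.sum_univ_two, Pi.star_apply, Complex.star_def] at hu hv huv hvu
  ext a b
  simp only [ptr2, outer, vecMulVec_apply, Pi.add_apply, Pi.smul_apply, tp, smul_eq_mul,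
    Pi.star_apply, star_add, star_mul', Fin.sum_univ_two, Matrix.add_apply, Matrix.smul_apply,
    ← Complex.mul_conj, Complex.star_def]
  linear_combination (α * conj α * u a * conj (u b)) * hv + (α * conj β * u a * conj (v b)) * hvu +
    (β * conj α * v a * conj (u b)) * huv + (β * conj β * v a * conj (v b)) * hu

theorem ptr1_outer_smul_tp_add_smul_tp (hu : u ⬝ᵥ star u = 1) (hv : v ⬝ᵥ star v = 1)
    (huv : u ⬝ᵥ star v = 0) :
    ptr1 (outer (α • tp u v + β • tp v u)) =
      (normSq α : ℂ) • vecMulVec v (star v) + (normSq β : ℂ) • vecMulVec u (star u) := by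
  have hswap : (α • tp u v + β • tp v u) ∘ Prod.swap = α • tp v u + β • tp u v := by
    ext p
    simp only [Function.comp_apply, Pi.add_apply, Pi.smul_apply, tp, Prod.fst_swap,
      Prod.snd_swap, mul_comm]
  have hvu : v ⬝ᵥ star u = 0 := by rw [dotProduct_star, huv, star_zero]
  rw [ptr1_outer_eq_ptr2_outer_comp_swap, hswap, ptr2_outer_smul_tp_add_smul_tp α β hv hu hvu]

end SwapSuperposition

section HalfSum

variable {A : Type*} [Ring A] [Module ℂ A] (M : A) {p q : ℂ}

theorem smul_half_one_add_add_smul_half_one_sub (h : p + q = 1) :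
    p • ((1 / 2 : ℂ) • (1 + M)) + q • ((1 / 2 : ℂ) • (1 - M)) =
      (1 / 2 : ℂ) • (1 + (p - q) • M) := by
  linear_combination (norm := module) (1 / 2 : ℂ) • h • (1 : A)

theorem smul_half_one_sub_add_smul_half_one_add (h : p + q = 1) :
    p • ((1 / 2 : ℂ) • (1 - M)) + q • ((1 / 2 : ℂ) • (1 + M)) =
      (1 / 2 : ℂ) • (1 - (p - q) • M) := by
  linear_combination (norm := module) (1 / 2 : ℂ) • h • (1 : A)

end HalfSum

theorem ejm_coeff_mul_self_add :
    (√3 + 1) / (2 * √2) * ((√3 + 1) / (2 * √2)) + (√3 - 1) / (2 * √2) * ((√3 - 1) / (2 * √2))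
      = 1 := by
  have h3 : √3 ^ 2 = 3 := Real.sq_sqrt (by norm_num)
  have h2 : √2 ^ 2 = 2 := Real.sq_sqrt (by norm_num)
  field_simp
  linear_combination 2 * h3 - 4 * h2

theorem ejm_coeff_mul_self_sub :
    (√3 + 1) / (2 * √2) * ((√3 + 1) / (2 * √2)) - (√3 - 1) / (2 * √2) * ((√3 - 1) / (2 * √2))
      = √3 / 2 := by
  have h2 : √2 ^ 2 = 2 := Real.sq_sqrt (by norm_num)
  field_simp
  linear_combination -2 * √3 * h2

theorem mtet_sq_add_sq_add_sq (i : Fin 4) : mtet i 0 ^ 2 + mtet i 1 ^ 2 + mtet i 2 ^ 2 = 1 := by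
  have h3 : √3 ^ 2 = 3 := Real.sq_sqrt (by norm_num)
  fin_cases i <;> simp [mtet, div_pow, h3] <;> norm_num

/-- The single-qubit marginals of the EJM states form a tetrahedral
configuration of Bloch length `√3/2`:
`Tr₂|ψ_i⟩⟨ψ_i| = ½(I + (√3/2) mᵢ·σ)` and `Tr₁|ψ_i⟩⟨ψ_i| = ½(I − (√3/2) mᵢ·σ)`. -/
theorem EJM_marginals_tetrahedral :
    ∀ i : Fin 4,
      ptr2 (outer (ψEJM i)) =
        (1 / 2 : ℂ) • ((1 : Matrix (Fin 2) (Fin 2) ℂ) +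
          ((Real.sqrt 3 / 2 : ℝ) : ℂ) • mDotSigma (mtet i)) ∧
      ptr1 (outer (ψEJM i)) =
        (1 / 2 : ℂ) • ((1 : Matrix (Fin 2) (Fin 2) ℂ) -
          ((Real.sqrt 3 / 2 : ℝ) : ℂ) • mDotSigma (mtet i)) := by
  intro i
  have hm := mtet_sq_add_sq_add_sq i
  have hsum : ((((√3 + 1) / (2 * √2) * ((√3 + 1) / (2 * √2)) : ℝ) : ℂ) +
      (((√3 - 1) / (2 * √2) * ((√3 - 1) / (2 * √2)) : ℝ) : ℂ)) = 1 := by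
    exact_mod_cast ejm_coeff_mul_self_add
  constructor
  · rw [ψEJM, ptr2_outer_smul_tp_add_smul_tp _ _ ketP_dotProduct_star_self
      ketM_dotProduct_star_self ketP_dotProduct_star_ketM, normSq_ofReal, normSq_ofReal,
      vecMulVec_ketP_star hm, vecMulVec_ketM_star hm,
      smul_half_one_add_add_smul_half_one_sub _ hsum, ← ofReal_sub, ejm_coeff_mul_self_sub]
  · rw [ψEJM, ptr1_outer_smul_tp_add_smul_tp _ _ ketP_dotProduct_star_self
      ketM_dotProduct_star_self ketP_dotProduct_star_ketM, normSq_ofReal, normSq_ofReal,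
      vecMulVec_ketP_star hm, vecMulVec_ketM_star hm,
      smul_half_one_sub_add_smul_half_one_add _ hsum, ← ofReal_sub, ejm_coeff_mul_self_sub]

end
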